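/- arXiv:2011.09262 — 2 statements merged into one kernel-verified Lean document; each statement's English description precedes it below -/
import Mathlib

section
/- If an assignment X : {1,…,n} × V → Bool satisfies all five conditions (A)–(E) of α_G, then the induced map p : {1,…,n} → V, where p(i) is the unique vertex v with X(i,v) true, is a Hamiltonian path in G. -/
/-- If an assignment `X : Fin n → V → Bool` satisfies all five conditions
(A)–(E) of `α_G`, then the induced map `p : Fin n → V`, where `p i` is the (by (C),(D)
unique) vertex `v` with `X i v` true, is a Hamiltonian path in `G`: a bijection of
`Fin n` onto `V` following the edges of `G`. -/
theorem induced_map_is_hamiltonian_path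
    {V : Type*} [Fintype V] (n : ℕ) (hn : 0 < n) (hcard : Fintype.card V = n)
    (E : V → V → Prop) (X : Fin n → V → Bool)
    -- (A) every vertex is visited
    (hA : ∀ v : V, ∃ i : Fin n, X i v)
    -- (B) no repetitions
    (hB : ∀ (v : V) (i j : Fin n), i ≠ j → ¬(X i v ∧ X j v))
    -- (C) at each step at least one vertex is visited
    (hC : ∀ i : Fin n, ∃ v : V, X i v)
    -- (D) at each step at most one vertex is visited
    (hD : ∀ (i : Fin n) (v w : V), v ≠ w → ¬(X i v ∧ X i w))
    -- (E) non-edges are never traversed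
    (hE : ∀ v w : V, ¬E v w → ∀ (i : Fin n) (h : i.1 + 1 < n),
      ¬(X i v ∧ X ⟨i.1 + 1, h⟩ w))
    -- `p` is the induced map: `p i` is the vertex visited at step `i`
    (p : Fin n → V) (hp : ∀ i : Fin n, X i (p i)) :
    Function.Bijective p ∧
      ∀ (i : Fin n) (h : i.1 + 1 < n), E (p i) (p ⟨i.1 + 1, h⟩) := by
  constructor
  · constructor
    · intro i j hij
      by_contra h
      exact hB (p i) i j h ⟨hp i, hij ▸ hp j⟩
    · intro v
      obtain ⟨i, hi⟩ := hA v
      refine ⟨i, ?_⟩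
      by_contra h
      exact hD i (p i) v h ⟨hp i, hi⟩
  · intro i h
    by_contra hne
    exact hE (p i) (p ⟨i.1 + 1, h⟩) hne i h ⟨hp i, hp _⟩
end

section
/- If p : {1,…,n} → V is a Hamiltonian path in G, then the assignment X defined by X(i,v) := (p(i) = v) satisfies all five conditions (A)–(E) of α_G. -/
/-- If `p : Fin n → V` is a Hamiltonian path in `G`, then the assignment
`X` defined by `X i v := (p i = v)` satisfies all five conditions (A)–(E) of `α_G`. -/
theorem hamiltonian_path_gives_satisfying_assignment
    {V : Type*} [Fintype V] [DecidableEq V] (n : ℕ) (hn : 0 < n)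
    (hcard : Fintype.card V = n) (E : V → V → Prop)
    (p : Fin n → V) (hbij : Function.Bijective p)
    (hedge : ∀ (i : Fin n) (h : i.1 + 1 < n), E (p i) (p ⟨i.1 + 1, h⟩))
    (X : Fin n → V → Bool) (hX : ∀ (i : Fin n) (v : V), X i v = decide (p i = v)) :
    -- (A) every vertex is visited
    (∀ v : V, ∃ i : Fin n, X i v) ∧
    -- (B) no repetitions
    (∀ (v : V) (i j : Fin n), i ≠ j → ¬(X i v ∧ X j v)) ∧
    -- (C) at each step at least one vertex is visited
    (∀ i : Fin n, ∃ v : V, X i v) ∧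
    -- (D) at each step at most one vertex is visited
    (∀ (i : Fin n) (v w : V), v ≠ w → ¬(X i v ∧ X i w)) ∧
    -- (E) non-edges are never traversed
    (∀ v w : V, ¬E v w → ∀ (i : Fin n) (h : i.1 + 1 < n),
      ¬(X i v ∧ X ⟨i.1 + 1, h⟩ w)) := by
  refine ⟨?_, ?_, ?_, ?_, ?_⟩
  · intro v
    obtain ⟨i, hi⟩ := hbij.2 v
    exact ⟨i, by simp [hX, hi]⟩
  · intro v i j hij ⟨h1, h2⟩
    simp [hX] at h1 h2
    exact hij (hbij.1 (h1.trans h2.symm))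
  · intro i
    exact ⟨p i, by simp [hX]⟩
  · intro i v w hvw ⟨h1, h2⟩
    simp [hX] at h1 h2
    exact hvw (h1 ▸ h2)
  · intro v w hE i h ⟨h1, h2⟩
    simp [hX] at h1 h2
    exact hE (h1 ▸ h2 ▸ hedge i h)
end
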